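/- arXiv:2407.10158 — 2 statements merged into one kernel-verified Lean document; each statement's English description precedes it below -/
import Mathlib

section
/- Let m, n be positive integers and h a norm on ℝ^m with generated norm H on ℝ^{m×n}. Let F_0 be a compactly supported finite ℝ^m-valued Borel measure on ℝ^n, F a compactly supported finite ℝ^{m×n}-valued Borel measure with ∂F = F_0, and φ : ℝ^n → ℝ^m an admissible dual potential such that |F|_H = ∫ φ · dF_0 (so that Dφ is a calibration for F). Then F minimizes |·|_H among all compactly supported finite ℝ^{m×n}-valued Borel measures G with ∂G = F_0, and φ maximizes ψ ↦ ∫ ψ · dF_0 among all admissible dual potentials ψ. -/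
open MeasureTheory

noncomputable section

/-- `ℝ^n` with the Euclidean norm. -/
abbrev Euc (n : ℕ) := EuclideanSpace ℝ (Fin n)

/-- `h` is a norm on `ℝ^m`. -/
def IsNorm {m : ℕ} (h : (Fin m → ℝ) → ℝ) : Prop :=
  (∀ x y, h (x + y) ≤ h x + h y) ∧ (∀ (c : ℝ) (x), h (c • x) = |c| * h x) ∧
    ∀ x, h x = 0 → x = 0

/-- The dual norm `h_*` of `h`: `h_*(g) = sup { g·θ : h θ ≤ 1 }`. -/
def dualNorm {m : ℕ} (h : (Fin m → ℝ) → ℝ) (g : Fin m → ℝ) : ℝ :=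
  sSup {r | ∃ θ : Fin m → ℝ, h θ ≤ 1 ∧ r = ∑ i, g i * θ i}

/-- Matrix-vector product `M u`. -/
def matVec {m n : ℕ} (M : Fin m → Fin n → ℝ) (u : Euc n) : Fin m → ℝ :=
  fun i => ∑ j, M i j * u j

/-- Frobenius inner product `M : N`. -/
def frob {m n : ℕ} (M N : Fin m → Fin n → ℝ) : ℝ := ∑ i, ∑ j, M i j * N i j

/-- `M ∈ ∂H(0)`, i.e. `h_*(M u) ≤ 1` for all `|u| ≤ 1`. -/
def inSubdiffH {m n : ℕ} (h : (Fin m → ℝ) → ℝ) (M : Fin m → Fin n → ℝ) : Prop :=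
  ∀ u : Euc n, ‖u‖ ≤ 1 → dualNorm h (matVec M u) ≤ 1

/-- The norm `H` on `ℝ^{m×n}` generated by `h`:
`H(N) = sup { M:N : M ∈ ∂H(0) }`. -/
def genNorm {m n : ℕ} (h : (Fin m → ℝ) → ℝ) (N : Fin m → Fin n → ℝ) : ℝ :=
  sSup {r | ∃ M : Fin m → Fin n → ℝ, inSubdiffH h M ∧ r = frob M N}

/-- The rank-one matrix `θ ⊗ e`. -/
def outer {m n : ℕ} (θ : Fin m → ℝ) (e : Euc n) : Fin m → Fin n → ℝ :=
  fun i j => θ i * e j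

/-- An `ℝ^{m×n}`-valued Borel measure on `ℝ^n`, given by its component signed measures. -/
abbrev MatMeas (m n : ℕ) := Fin m → Fin n → MeasureTheory.SignedMeasure (Euc n)

/-- An `ℝ^m`-valued Borel measure on `ℝ^n`, given by its component signed measures. -/
abbrev VecMeas (m n : ℕ) := Fin m → MeasureTheory.SignedMeasure (Euc n)

/-- Integral of a function against a signed measure (via the Jordan decomposition). -/
def sInt {n : ℕ} (ν : MeasureTheory.SignedMeasure (Euc n)) (f : Euc n → ℝ) : ℝ :=
  ∫ x, f x ∂ν.toJordanDecomposition.posPart - ∫ x, f x ∂ν.toJordanDecomposition.negPart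

/-- The total variation `|F|_H` of `F` with respect to the norm `H` generated by `h`:
the supremum of `Σ_k H(F(B_k))` over countable Borel partitions `(B_k)` of `ℝ^n`. -/
def tvH {m n : ℕ} (h : (Fin m → ℝ) → ℝ) (F : MatMeas m n) : ℝ :=
  sSup {r | ∃ B : ℕ → Set (Euc n), (∀ k, MeasurableSet (B k)) ∧
    Pairwise (Function.onFun Disjoint B) ∧ (⋃ k, B k) = Set.univ ∧
    r = ∑' k, genNorm h (fun i j => F i j (B k))}

/-- `F` is supported in `K`: it vanishes on Borel sets disjoint from `K`. -/
def suppIn {m n : ℕ} (F : MatMeas m n) (K : Set (Euc n)) : Prop :=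
  ∀ B : Set (Euc n), MeasurableSet B → Disjoint B K → ∀ i j, F i j B = 0

/-- `F` is compactly supported. -/
def suppInCpt {m n : ℕ} (F : MatMeas m n) : Prop :=
  ∃ K : Set (Euc n), IsCompact K ∧ suppIn F K

/-- `F₀` is compactly supported. -/
def vSuppInCpt {m n : ℕ} (F0 : VecMeas m n) : Prop :=
  ∃ K : Set (Euc n), IsCompact K ∧
    ∀ B : Set (Euc n), MeasurableSet B → Disjoint B K → ∀ i, F0 i B = 0

/-- The Jacobian matrix `Dψ(x) ∈ ℝ^{m×n}` of `ψ : ℝ^n → ℝ^m`. -/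
def jac {m n : ℕ} (ψ : Euc n → (Fin m → ℝ)) (x : Euc n) : Fin m → Fin n → ℝ :=
  fun i j => fderiv ℝ ψ x (EuclideanSpace.single j 1) i

/-- `∂F = F₀`, i.e. `∫ Dψ : dF = ∫ ψ · dF₀` for all smooth compactly supported `ψ`. -/
def isBoundary {m n : ℕ} (F : MatMeas m n) (F0 : VecMeas m n) : Prop :=
  ∀ ψ : Euc n → (Fin m → ℝ), ContDiff ℝ (⊤ : ℕ∞) ψ → HasCompactSupport ψ →
    (∑ i, ∑ j, sInt (F i j) fun x => jac ψ x i j) = ∑ i, sInt (F0 i) fun x => ψ x i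

/-- `φ` is an admissible dual potential: `h_*(φ(y) - φ(x)) ≤ |y - x|`. -/
def admissible {m n : ℕ} (h : (Fin m → ℝ) → ℝ) (φ : Euc n → Fin m → ℝ) : Prop :=
  ∀ x y : Euc n, dualNorm h (φ y - φ x) ≤ ‖y - x‖

/-- The dual objective `∫ φ · dF₀`. -/
def intDual {m n : ℕ} (F0 : VecMeas m n) (φ : Euc n → Fin m → ℝ) : ℝ :=
  ∑ i, sInt (F0 i) fun x => φ x i

/-!
Weak duality suffices: for every feasible `G` and every admissible `ψ`, `∫ ψ · dF₀ ≤ |G|_H`,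
which together with `|F|_H = ∫ φ · dF₀` gives both optimality claims.

To prove it, mollify `ψ`: the mollified `φ_ε` is smooth, uniformly `ε`-close to `ψ`, and still
`1`-Lipschitz in every direction `θ` with `h θ ≤ 1`, so `Dφ_ε(x) ∈ ∂H(0)` everywhere. After a cutoff
outside the supports, `∂G = F₀` gives `∫ φ_ε · dF₀ = ∫ Dφ_ε : dG`. On a countable Borel partition
fine enough that `Dφ_ε` is almost constant on each piece (uniform continuity on the compact
support of `G`), `∫ Dφ_ε : dG` is at most `Σ_k H(G(B_k)) ≤ |G|_H` up to an error `O(ε)`.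
-/

open Filter Metric Topology MeasureTheory
open scoped Matrix NNReal Convolution
open ContinuousLinearMap (lsmul lsmul_apply)

lemma le_of_forall_pos_le_add_mul {a b c : ℝ} (hle : ∀ ε > 0, a ≤ b + ε * c) : a ≤ b := by
  have hlim : Tendsto (fun ε => b + ε * c) (𝓝[>] 0) (𝓝 b) := by
    have := (continuous_const.add (continuous_id.mul continuous_const)).tendsto (0 : ℝ)
      (f := fun ε => b + ε * c)
    simpa using this.mono_left nhdsWithin_le_nhds
  exact ge_of_tendsto hlim (eventually_nhdsWithin_of_forall hle)

namespace IsNorm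

variable {m : ℕ} {h : (Fin m → ℝ) → ℝ}

lemma map_zero (hh : IsNorm h) : h 0 = 0 := by
  simpa using hh.2.1 0 0

lemma map_neg (hh : IsNorm h) (x : Fin m → ℝ) : h (-x) = h x := by
  simpa using hh.2.1 (-1) x

lemma nonneg (hh : IsNorm h) (x : Fin m → ℝ) : 0 ≤ h x := by
  have := hh.1 x (-x)
  rw [add_neg_cancel, hh.map_zero, hh.map_neg] at this
  linarith

lemma pos (hh : IsNorm h) {x : Fin m → ℝ} (hx : x ≠ 0) : 0 < h x :=
  (hh.nonneg x).lt_of_ne fun h0 => hx (hh.2.2 x h0.symm)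

lemma convexOn (hh : IsNorm h) : ConvexOn ℝ Set.univ h := by
  refine ⟨convex_univ, fun x _ y _ a b ha hb _ => ?_⟩
  calc h (a • x + b • y) ≤ h (a • x) + h (b • y) := hh.1 _ _
    _ = a * h x + b * h y := by rw [hh.2.1, hh.2.1, abs_of_nonneg ha, abs_of_nonneg hb]

lemma continuous (hh : IsNorm h) : Continuous h := by
  simpa [continuousOn_univ] using hh.convexOn.continuousOn_interior

lemma exists_pos_mul_norm_le (hh : IsNorm h) : ∃ a > 0, ∀ θ, a * ‖θ‖ ≤ h θ := by
  obtain ⟨a, ha, hmin⟩ := (isCompact_sphere (0 : Fin m → ℝ) 1).exists_forall_le'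
    hh.continuous.continuousOn (a := 0) fun θ hθ =>
      hh.pos (ne_zero_of_mem_unit_sphere (⟨θ, hθ⟩ : sphere (0 : Fin m → ℝ) 1))
  refine ⟨a, ha, fun θ => ?_⟩
  rcases eq_or_ne θ 0 with rfl | hθ
  · simp [hh.map_zero]
  · have hθ' : 0 < ‖θ‖ := norm_pos_iff.2 hθ
    have := hmin (‖θ‖⁻¹ • θ) (by simp [norm_smul, hθ'.ne'])
    rw [hh.2.1, abs_of_pos (inv_pos.2 hθ'), inv_mul_eq_div, le_div_iff₀ hθ'] at this
    exact this

lemma bddAbove_dualNorm_set (hh : IsNorm h) (g : Fin m → ℝ) :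
    BddAbove {r | ∃ θ : Fin m → ℝ, h θ ≤ 1 ∧ r = g ⬝ᵥ θ} := by
  obtain ⟨a, ha, hle⟩ := hh.exists_pos_mul_norm_le
  refine ⟨∑ i, |g i| * a⁻¹, ?_⟩
  rintro _ ⟨θ, hθ, rfl⟩
  have hθa : ‖θ‖ ≤ a⁻¹ :=
    le_of_mul_le_mul_left (by rw [mul_inv_cancel₀ ha.ne']; linarith [hle θ]) ha
  refine Finset.sum_le_sum fun i _ => ?_
  calc g i * θ i ≤ |g i| * |θ i| := by rw [← abs_mul]; exact le_abs_self _
    _ ≤ |g i| * a⁻¹ := by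
      gcongr
      exact (norm_le_pi_norm θ i).trans hθa

lemma dotProduct_le_dualNorm (hh : IsNorm h) (g : Fin m → ℝ) {θ : Fin m → ℝ} (hθ : h θ ≤ 1) :
    g ⬝ᵥ θ ≤ dualNorm h g :=
  le_csSup (hh.bddAbove_dualNorm_set g) ⟨θ, hθ, rfl⟩

lemma dualNorm_le (hh : IsNorm h) {g : Fin m → ℝ} {c : ℝ} (hc : ∀ θ, h θ ≤ 1 → g ⬝ᵥ θ ≤ c) :
    dualNorm h g ≤ c :=
  csSup_le ⟨0, 0, by simp [hh.map_zero]⟩ (by rintro _ ⟨θ, hθ, rfl⟩; exact hc θ hθ)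

lemma dualNorm_nonneg (hh : IsNorm h) (g : Fin m → ℝ) : 0 ≤ dualNorm h g := by
  simpa using hh.dotProduct_le_dualNorm g (θ := 0) (by simp [hh.map_zero])

lemma dotProduct_le_dualNorm_mul (hh : IsNorm h) (g θ : Fin m → ℝ) :
    g ⬝ᵥ θ ≤ dualNorm h g * h θ := by
  rcases eq_or_ne θ 0 with rfl | hθ
  · simp [hh.map_zero]
  have hθ' := hh.pos hθ
  have := hh.dotProduct_le_dualNorm g (θ := (h θ)⁻¹ • θ)
    (by rw [hh.2.1, abs_of_pos (inv_pos.2 hθ'), inv_mul_cancel₀ hθ'.ne'])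
  rwa [dotProduct_smul, smul_eq_mul, inv_mul_le_iff₀ hθ', mul_comm] at this

lemma abs_apply_le_mul_dualNorm (hh : IsNorm h) (g : Fin m → ℝ) (i : Fin m) :
    |g i| ≤ h (Pi.single i 1) * dualNorm h g := by
  have hplus := hh.dotProduct_le_dualNorm_mul g (Pi.single i 1)
  have hminus := hh.dotProduct_le_dualNorm_mul g (-Pi.single i 1)
  rw [dotProduct_single, mul_one] at hplus
  rw [dotProduct_neg, dotProduct_single, mul_one, hh.map_neg] at hminus
  rw [abs_le, mul_comm]
  constructor <;> linarith

lemma norm_le_mul_dualNorm (hh : IsNorm h) (g : Fin m → ℝ) :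
    ‖g‖ ≤ (∑ i, h (Pi.single i 1)) * dualNorm h g := by
  refine pi_norm_le_iff_of_nonneg
    (mul_nonneg (Finset.sum_nonneg fun i _ => hh.nonneg _) (hh.dualNorm_nonneg g)) |>.2 fun i => ?_
  calc ‖g i‖ ≤ h (Pi.single i 1) * dualNorm h g := hh.abs_apply_le_mul_dualNorm g i
    _ ≤ (∑ i, h (Pi.single i 1)) * dualNorm h g :=
      mul_le_mul_of_nonneg_right (Finset.single_le_sum (f := fun j => h (Pi.single j 1))
        (fun j _ => hh.nonneg _) (Finset.mem_univ i)) (hh.dualNorm_nonneg g)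

end IsNorm

lemma matVec_single {m n : ℕ} (M : Fin m → Fin n → ℝ) (j : Fin n) :
    matVec M (EuclideanSpace.single j 1) = fun i => M i j := by
  ext i
  simp [matVec]

lemma matVec_jac {m n : ℕ} (φ : Euc n → Fin m → ℝ) (x u : Euc n) :
    matVec (jac φ x) u = fderiv ℝ φ x u := by
  conv_rhs => rw [← (EuclideanSpace.basisFun (Fin n) ℝ).sum_repr u]
  ext i
  simp [matVec, jac, mul_comm]

namespace IsNorm

variable {m n : ℕ} {h : (Fin m → ℝ) → ℝ}

lemma inSubdiffH_zero (hh : IsNorm h) : inSubdiffH h (0 : Fin m → Fin n → ℝ) := by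
  intro u _
  refine hh.dualNorm_le fun θ _ => ?_
  unfold matVec
  simp

lemma abs_le_of_inSubdiffH (hh : IsNorm h) {M : Fin m → Fin n → ℝ} (hM : inSubdiffH h M)
    (i : Fin m) (j : Fin n) : |M i j| ≤ h (Pi.single i 1) := by
  have hcol := hM (EuclideanSpace.single j 1) (by simp)
  rw [matVec_single] at hcol
  calc |M i j| ≤ h (Pi.single i 1) * dualNorm h (fun i => M i j) :=
        hh.abs_apply_le_mul_dualNorm (fun i => M i j) i
    _ ≤ h (Pi.single i 1) := mul_le_of_le_one_right (hh.nonneg _) hcol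

lemma frob_le_sum (hh : IsNorm h) {M : Fin m → Fin n → ℝ} (hM : inSubdiffH h M)
    (N : Fin m → Fin n → ℝ) : frob M N ≤ ∑ i, ∑ j, h (Pi.single i 1) * |N i j| := by
  refine Finset.sum_le_sum fun i _ => Finset.sum_le_sum fun j _ => ?_
  calc M i j * N i j ≤ |M i j| * |N i j| := by rw [← abs_mul]; exact le_abs_self _
    _ ≤ h (Pi.single i 1) * |N i j| := by gcongr; exact hh.abs_le_of_inSubdiffH hM i j

lemma frob_le_genNorm (hh : IsNorm h) {M : Fin m → Fin n → ℝ} (hM : inSubdiffH h M)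
    (N : Fin m → Fin n → ℝ) : frob M N ≤ genNorm h N :=
  le_csSup ⟨_, by rintro _ ⟨M', hM', rfl⟩; exact hh.frob_le_sum hM' N⟩ ⟨M, hM, rfl⟩

lemma genNorm_le_sum (hh : IsNorm h) (N : Fin m → Fin n → ℝ) :
    genNorm h N ≤ ∑ i, ∑ j, h (Pi.single i 1) * |N i j| :=
  csSup_le ⟨_, 0, hh.inSubdiffH_zero, rfl⟩ (by rintro _ ⟨M, hM, rfl⟩; exact hh.frob_le_sum hM N)

lemma genNorm_nonneg (hh : IsNorm h) (N : Fin m → Fin n → ℝ) : 0 ≤ genNorm h N := by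
  simpa [frob] using hh.frob_le_genNorm hh.inSubdiffH_zero N

end IsNorm

namespace admissible

variable {m n : ℕ} {h : (Fin m → ℝ) → ℝ} {ψ : Euc n → Fin m → ℝ}

lemma lipschitzWith_dotProduct (hψ : admissible h ψ) (hh : IsNorm h) {θ : Fin m → ℝ}
    (hθ : h θ ≤ 1) : LipschitzWith 1 fun x => ψ x ⬝ᵥ θ := by
  refine LipschitzWith.of_le_add_mul 1 fun x y => ?_
  have := (hh.dotProduct_le_dualNorm (ψ x - ψ y) hθ).trans (hψ y x)
  rw [sub_dotProduct, ← dist_eq_norm] at this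
  push_cast
  linarith

lemma lipschitzWith (hψ : admissible h ψ) (hh : IsNorm h) :
    ∃ C, LipschitzWith C ψ := by
  have hC : 0 ≤ ∑ i, h (Pi.single i 1) := Finset.sum_nonneg fun i _ => hh.nonneg _
  refine ⟨(∑ i, h (Pi.single i 1)).toNNReal, LipschitzWith.of_dist_le_mul fun x y => ?_⟩
  rw [Real.coe_toNNReal _ hC, dist_eq_norm, dist_eq_norm]
  exact (hh.norm_le_mul_dualNorm _).trans (mul_le_mul_of_nonneg_left (hψ y x) hC)

end admissible

def dotProductRightCLM {m : ℕ} (θ : Fin m → ℝ) : (Fin m → ℝ) →L[ℝ] ℝ :=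
  LinearMap.toContinuousLinearMap ((dotProductBilin ℝ ℝ).flip θ)

@[simp]
lemma dotProductRightCLM_apply {m : ℕ} (θ v : Fin m → ℝ) : dotProductRightCLM θ v = v ⬝ᵥ θ :=
  rfl

lemma IsNorm.inSubdiffH_jac {m n : ℕ} {h : (Fin m → ℝ) → ℝ} (hh : IsNorm h)
    {φ : Euc n → Fin m → ℝ} (hφ : Differentiable ℝ φ)
    (hlip : ∀ θ, h θ ≤ 1 → LipschitzWith 1 fun x => φ x ⬝ᵥ θ) (x : Euc n) :
    inSubdiffH h (jac φ x) := by
  intro u hu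
  refine hh.dualNorm_le fun θ hθ => ?_
  have hderiv : fderiv ℝ (fun y => φ y ⬝ᵥ θ) x = (dotProductRightCLM θ).comp (fderiv ℝ φ x) :=
    ((dotProductRightCLM θ).hasFDerivAt.comp x (hφ x).hasFDerivAt).fderiv
  calc matVec (jac φ x) u ⬝ᵥ θ = fderiv ℝ (fun y => φ y ⬝ᵥ θ) x u := by
        rw [matVec_jac, hderiv]; rfl
    _ ≤ ‖fderiv ℝ (fun y => φ y ⬝ᵥ θ) x‖ * ‖u‖ :=
        (Real.le_norm_self _).trans (ContinuousLinearMap.le_opNorm _ _)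
    _ ≤ 1 * 1 := by
        gcongr
        exact_mod_cast norm_fderiv_le_of_lipschitz ℝ (hlip θ hθ)
    _ = 1 := one_mul 1

section Mollification

variable {G : Type*} [NormedAddCommGroup G] [MeasurableSpace G] [BorelSpace G]
  {μ : Measure G} [IsFiniteMeasureOnCompacts μ] {ρ : G → ℝ}

lemma ContinuousLinearMap.map_convolution_lsmul {E F : Type*} [NormedAddCommGroup E]
    [NormedSpace ℝ E] [CompleteSpace E] [NormedAddCommGroup F] [NormedSpace ℝ F]
    [CompleteSpace F] (L : E →L[ℝ] F) (hρc : Continuous ρ) (hρs : HasCompactSupport ρ)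
    {g : G → E} (hg : Continuous g) (x : G) :
    L ((ρ ⋆[lsmul ℝ ℝ, μ] g) x) = (ρ ⋆[lsmul ℝ ℝ, μ] (L ∘ g)) x := by
  have hint : Integrable (fun t => ρ t • g (x - t)) μ :=
    (hρc.smul (hg.comp (continuous_const.sub continuous_id))).integrable_of_hasCompactSupport
      hρs.smul_right
  simp only [convolution_def, lsmul_apply, Function.comp_apply, ← L.integral_comp_comm hint,
    map_smul]

lemma LipschitzWith.convolution_lsmul_left {K : ℝ≥0} {f : G → ℝ} (hf : LipschitzWith K f)
    (hρc : Continuous ρ) (hρs : HasCompactSupport ρ) (hρ0 : ∀ t, 0 ≤ ρ t)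
    (hρ1 : ∫ t, ρ t ∂μ = 1) : LipschitzWith K (ρ ⋆[lsmul ℝ ℝ, μ] f) := by
  have hint : ∀ z, Integrable (fun t => ρ t * f (z - t)) μ := fun z =>
    (hρc.mul (hf.continuous.comp (continuous_const.sub continuous_id))
      ).integrable_of_hasCompactSupport hρs.mul_right
  refine LipschitzWith.of_le_add_mul K fun x y => ?_
  simp only [convolution_def, lsmul_apply, smul_eq_mul]
  calc ∫ t, ρ t * f (x - t) ∂μ ≤ ∫ t, (ρ t * f (y - t) + ρ t * (K * dist x y)) ∂μ := by
        refine integral_mono (hint x) ((hint y).add ?_) fun t => ?_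
        · exact (hρc.integrable_of_hasCompactSupport hρs).mul_const _
        · have hlip : f (x - t) - f (y - t) ≤ K * dist x y := by
            rw [← dist_sub_right x y t]
            exact (le_abs_self _).trans
              (by simpa [Real.dist_eq] using hf.dist_le_mul (x - t) (y - t))
          rw [← mul_add]
          exact mul_le_mul_of_nonneg_left (by linarith) (hρ0 t)
    _ = ∫ t, ρ t * f (y - t) ∂μ + K * dist x y := by
        rw [integral_add (hint y) ((hρc.integrable_of_hasCompactSupport hρs).mul_const _),
          integral_mul_const, hρ1, one_mul]

end Mollification

lemma IsNorm.exists_contDiff_approx {m n : ℕ} {h : (Fin m → ℝ) → ℝ} (hh : IsNorm h)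
    {ψ : Euc n → Fin m → ℝ} (hψ : admissible h ψ) {ε : ℝ} (hε : 0 < ε) :
    ∃ φ : Euc n → Fin m → ℝ, ContDiff ℝ (⊤ : ℕ∞) φ ∧
      (∀ θ, h θ ≤ 1 → LipschitzWith 1 fun x => φ x ⬝ᵥ θ) ∧ ∀ x, dist (φ x) (ψ x) ≤ ε := by
  obtain ⟨C, hC⟩ := hψ.lipschitzWith hh
  set r := ε / (C + 1)
  have hr : 0 < r := by positivity
  let b : ContDiffBump (0 : Euc n) := ⟨r / 2, r, by positivity, by linarith⟩
  refine ⟨b.normed volume ⋆[lsmul ℝ ℝ, volume] ψ,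
    b.hasCompactSupport_normed.contDiff_convolution_left _ b.contDiff_normed
      hC.continuous.locallyIntegrable, fun θ hθ => ?_, fun x => ?_⟩
  · have hconv := (hψ.lipschitzWith_dotProduct hh hθ).convolution_lsmul_left
      b.continuous_normed b.hasCompactSupport_normed b.nonneg_normed
      (b.integral_normed (μ := volume))
    have hcomm : (fun x => (b.normed volume ⋆[lsmul ℝ ℝ, volume] ψ) x ⬝ᵥ θ) =
        b.normed volume ⋆[lsmul ℝ ℝ, volume] fun x => ψ x ⬝ᵥ θ :=
      funext <| (dotProductRightCLM θ).map_convolution_lsmul b.continuous_normed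
        b.hasCompactSupport_normed hC.continuous
    rw [hcomm]
    exact hconv
  · refine b.dist_normed_convolution_le hC.continuous.aestronglyMeasurable fun y hy => ?_
    calc dist (ψ y) (ψ x) ≤ C * dist y x := hC.dist_le_mul y x
      _ ≤ (C + 1) * r := by gcongr; exacts [le_add_of_nonneg_right zero_le_one, (mem_ball.1 hy).le]
      _ = ε := by simp [r]; field_simp

lemma exists_contDiff_hasCompactSupport_eventuallyEq {n : ℕ} {E : Type*} [NormedAddCommGroup E]
    [NormedSpace ℝ E] {K : Set (Euc n)} (hK : IsCompact K) {φ : Euc n → E}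
    (hφ : ContDiff ℝ (⊤ : ℕ∞) φ) :
    ∃ ψ : Euc n → E, ContDiff ℝ (⊤ : ℕ∞) ψ ∧ HasCompactSupport ψ ∧ ∀ x ∈ K, ψ =ᶠ[𝓝 x] φ := by
  obtain ⟨R, hR⟩ := hK.isBounded.subset_ball (0 : Euc n)
  let χ : ContDiffBump (0 : Euc n) :=
    ⟨max R 1, max R 1 + 1, lt_max_of_lt_right one_pos, by linarith⟩
  refine ⟨fun x => χ x • φ x, χ.contDiff.smul hφ, χ.hasCompactSupport.smul_right, fun x hx => ?_⟩
  filter_upwards [isOpen_ball.mem_nhds (hR hx)] with y hy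
  rw [χ.one_of_mem_closedBall (ball_subset_closedBall (ball_subset_ball (le_max_left _ _) hy)),
    one_smul]

lemma ContDiff.continuous_jac {m n : ℕ} {φ : Euc n → Fin m → ℝ} (hφ : ContDiff ℝ 1 φ) :
    Continuous (jac φ) :=
  continuous_pi fun i => continuous_pi fun j => (continuous_apply i).comp
    ((hφ.continuous_fderiv one_ne_zero).clm_apply
      (continuous_const (y := EuclideanSpace.single j 1)))

section Measures

variable {α : Type*} [MeasurableSpace α]

structure IsMeasurablePartition (B : ℕ → Set α) : Prop where
  measurableSet : ∀ k, MeasurableSet (B k)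
  disjoint : Pairwise (Function.onFun Disjoint B)
  iUnion_eq : ⋃ k, B k = Set.univ

lemma IsMeasurablePartition.hasSum_measureReal {B : ℕ → Set α} (hB : IsMeasurablePartition B)
    (μ : Measure α) [IsFiniteMeasure μ] : HasSum (fun k => μ.real (B k)) (μ.real Set.univ) := by
  have hunion := measure_iUnion hB.disjoint hB.measurableSet (μ := μ)
  rw [hB.iUnion_eq] at hunion
  have hfin : ∑' k, μ (B k) ≠ ⊤ := hunion ▸ measure_ne_top μ Set.univ
  simpa [measureReal_def, hunion, ENNReal.tsum_toReal_eq fun k => measure_ne_top μ (B k)]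
    using ENNReal.hasSum_toReal hfin

lemma exists_isMeasurablePartition_dist_lt {X : Type*} [PseudoMetricSpace X]
    [TopologicalSpace.SeparableSpace X] [Nonempty X] [MeasurableSpace X] [OpensMeasurableSpace X]
    {δ : ℝ} (hδ : 0 < δ) :
    ∃ B : ℕ → Set X, IsMeasurablePartition B ∧ ∀ k, ∀ x ∈ B k, ∀ y ∈ B k, dist x y < δ := by
  set c := TopologicalSpace.denseSeq X
  refine ⟨disjointed fun k => ball (c k) (δ / 2),
    ⟨MeasurableSet.disjointed fun k => measurableSet_ball, disjoint_disjointed _, ?_⟩,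
    fun k x hx y hy => ?_⟩
  · rw [iUnion_disjointed, Set.eq_univ_iff_forall]
    intro x
    obtain ⟨k, hk⟩ := (TopologicalSpace.denseRange_denseSeq X).exists_dist_lt x (half_pos hδ)
    exact Set.mem_iUnion.2 ⟨k, mem_ball.2 hk⟩
  · have hx' := mem_ball.1 (disjointed_subset _ k hx)
    have hy' := mem_ball.1 (disjointed_subset _ k hy)
    linarith [dist_triangle_right x y (c k)]

namespace MeasureTheory.SignedMeasure

variable (ν : SignedMeasure α)

lemma totalVariation_compl_eq_zero {K : Set α} (hK : MeasurableSet K)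
    (hν : ∀ B, MeasurableSet B → Disjoint B K → ν B = 0) : ν.totalVariation Kᶜ = 0 := by
  obtain ⟨i, hi, _, _, hpos, hneg⟩ := ν.toJordanDecomposition_spec
  have hdisj : ∀ s : Set α, Disjoint (s ∩ Kᶜ) K := fun s =>
    disjoint_compl_left.mono_left Set.inter_subset_right
  rw [totalVariation, Measure.add_apply, hpos, hneg, toMeasureOfZeroLE_apply _ _ _ hK.compl,
    toMeasureOfLEZero_apply _ _ _ hK.compl]
  simp [hν _ (hi.inter hK.compl) (hdisj i), hν _ (hi.compl.inter hK.compl) (hdisj iᶜ)]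

lemma posPart_eq_zero_and_negPart_eq_zero {s : Set α} (hs : ν.totalVariation s = 0) :
    ν.toJordanDecomposition.posPart s = 0 ∧ ν.toJordanDecomposition.negPart s = 0 := by
  simpa [totalVariation] using hs

lemma abs_apply_le_totalVariation_real {B : Set α} (hB : MeasurableSet B) :
    |ν B| ≤ ν.totalVariation.real B := by
  rw [ν.apply_eq_posPart_real_sub_negPart_real hB, totalVariation, measureReal_add_apply, abs_le]
  constructor <;> linarith [measureReal_nonneg (μ := ν.toJordanDecomposition.posPart) (s := B),
    measureReal_nonneg (μ := ν.toJordanDecomposition.negPart) (s := B)]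

end MeasureTheory.SignedMeasure

end Measures

lemma Continuous.integrable_of_isCompact_of_measure_compl_eq_zero {X : Type*} [TopologicalSpace X]
    [T2Space X] [MeasurableSpace X] [OpensMeasurableSpace X] {μ : Measure X} [IsFiniteMeasure μ]
    {K : Set X} (hK : IsCompact K) (hμ : μ Kᶜ = 0) {f : X → ℝ} (hf : Continuous f) :
    Integrable f μ := by
  rw [← Measure.restrict_eq_self_of_ae_mem (mem_ae_iff.2 hμ)]
  exact hf.continuousOn.integrableOn_compact hK

section SignedIntegral

variable {n : ℕ} {ν : SignedMeasure (Euc n)} {K : Set (Euc n)} {f g : Euc n → ℝ}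

def sIntOn (ν : SignedMeasure (Euc n)) (B : Set (Euc n)) (f : Euc n → ℝ) : ℝ :=
  ∫ x in B, f x ∂ν.toJordanDecomposition.posPart - ∫ x in B, f x ∂ν.toJordanDecomposition.negPart

lemma sInt_congr (hν : ν.totalVariation Kᶜ = 0) (hfg : Set.EqOn f g K) : sInt ν f = sInt ν g := by
  obtain ⟨hpos, hneg⟩ := ν.posPart_eq_zero_and_negPart_eq_zero hν
  have key : ∀ μ : Measure (Euc n), μ Kᶜ = 0 → ∫ x, f x ∂μ = ∫ x, g x ∂μ := fun μ hμ =>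
    integral_congr_ae (Filter.mem_of_superset (mem_ae_iff.2 hμ) fun _ hx => hfg hx)
  rw [sInt, sInt, key _ hpos, key _ hneg]

lemma sInt_le_add (hK : IsCompact K) (hν : ν.totalVariation Kᶜ = 0) (hf : Continuous f)
    (hg : Continuous g) {c : ℝ} (hfg : ∀ x, |f x - g x| ≤ c) :
    sInt ν f ≤ sInt ν g + c * ν.totalVariation.real Set.univ := by
  obtain ⟨hpos, hneg⟩ := ν.posPart_eq_zero_and_negPart_eq_zero hν
  have key : ∀ μ : Measure (Euc n), IsFiniteMeasure μ → μ Kᶜ = 0 →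
      |∫ x, f x ∂μ - ∫ x, g x ∂μ| ≤ c * μ.real Set.univ := fun μ _ hμ => by
    rw [← integral_sub (hf.integrable_of_isCompact_of_measure_compl_eq_zero hK hμ)
      (hg.integrable_of_isCompact_of_measure_compl_eq_zero hK hμ)]
    exact norm_integral_le_of_norm_le_const
      (ae_of_all _ fun x => (Real.norm_eq_abs _).trans_le (hfg x))
  have hp := abs_le.1 (key _ inferInstance hpos)
  have hn := abs_le.1 (key _ inferInstance hneg)
  rw [sInt, sInt, SignedMeasure.totalVariation, measureReal_add_apply]
  linarith [hp.1, hp.2, hn.1, hn.2]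

lemma hasSum_sIntOn (hK : IsCompact K) (hν : ν.totalVariation Kᶜ = 0) (hf : Continuous f)
    {B : ℕ → Set (Euc n)} (hB : IsMeasurablePartition B) :
    HasSum (fun k => sIntOn ν (B k) f) (sInt ν f) := by
  obtain ⟨hpos, hneg⟩ := ν.posPart_eq_zero_and_negPart_eq_zero hν
  have key : ∀ μ : Measure (Euc n), IsFiniteMeasure μ → μ Kᶜ = 0 →
      HasSum (fun k => ∫ x in B k, f x ∂μ) (∫ x, f x ∂μ) := fun μ _ hμ => by
    simpa [hB.iUnion_eq] using hasSum_integral_iUnion hB.measurableSet hB.disjoint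
      (hf.integrable_of_isCompact_of_measure_compl_eq_zero hK hμ).integrableOn
  exact (key _ inferInstance hpos).sub (key _ inferInstance hneg)

lemma abs_sIntOn_sub_le (hK : IsCompact K) (hν : ν.totalVariation Kᶜ = 0) (hf : Continuous f)
    {B : Set (Euc n)} (hB : MeasurableSet B) {c ε : ℝ} (hfc : ∀ x ∈ B ∩ K, |f x - c| ≤ ε) :
    |sIntOn ν B f - c * ν B| ≤ ε * ν.totalVariation.real B := by
  obtain ⟨hpos, hneg⟩ := ν.posPart_eq_zero_and_negPart_eq_zero hν
  have key : ∀ μ : Measure (Euc n), IsFiniteMeasure μ → μ Kᶜ = 0 →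
      |∫ x in B, f x ∂μ - c * μ.real B| ≤ ε * μ.real B := fun μ _ hμ => by
    have hconst : ∫ _ in B, c ∂μ = c * μ.real B := by simp [mul_comm]
    rw [← hconst, ← integral_sub
      (hf.integrable_of_isCompact_of_measure_compl_eq_zero hK hμ).integrableOn
      (integrableOn_const (measure_ne_top μ B))]
    rw [← Real.norm_eq_abs]
    refine norm_setIntegral_le_of_norm_le_const_ae' (measure_lt_top μ B) ?_
    filter_upwards [mem_ae_iff.2 hμ] with x hxK hxB
    exact hfc x ⟨hxB, hxK⟩
  have hp := abs_le.1 (key _ inferInstance hpos)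
  have hn := abs_le.1 (key _ inferInstance hneg)
  rw [sIntOn, ν.apply_eq_posPart_real_sub_negPart_real hB, SignedMeasure.totalVariation,
    measureReal_add_apply, abs_le]
  constructor <;> nlinarith [hp.1, hp.2, hn.1, hn.2]

end SignedIntegral

lemma IsMeasurablePartition.hasSum_sum_totalVariation_real {m n : ℕ} {B : ℕ → Set (Euc n)}
    (hB : IsMeasurablePartition B) (G : MatMeas m n) (w : Fin m → Fin n → ℝ) :
    HasSum (fun k => ∑ i, ∑ j, w i j * (G i j).totalVariation.real (B k))
      (∑ i, ∑ j, w i j * (G i j).totalVariation.real Set.univ) :=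
  hasSum_sum fun _ _ => hasSum_sum fun _ _ => (hB.hasSum_measureReal _).mul_left _

namespace IsNorm

variable {m n : ℕ} {h : (Fin m → ℝ) → ℝ}

lemma genNorm_apply_le (hh : IsNorm h) (G : MatMeas m n) {B : Set (Euc n)}
    (hB : MeasurableSet B) :
    genNorm h (fun i j => G i j B) ≤
      ∑ i, ∑ j, h (Pi.single i 1) * (G i j).totalVariation.real B :=
  (hh.genNorm_le_sum _).trans <| Finset.sum_le_sum fun i _ => Finset.sum_le_sum fun j _ =>
    mul_le_mul_of_nonneg_left ((G i j).abs_apply_le_totalVariation_real hB) (hh.nonneg _)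

lemma summable_genNorm (hh : IsNorm h) (G : MatMeas m n) {B : ℕ → Set (Euc n)}
    (hB : IsMeasurablePartition B) : Summable fun k => genNorm h (fun i j => G i j (B k)) :=
  Summable.of_nonneg_of_le (fun _ => hh.genNorm_nonneg _)
    (fun k => hh.genNorm_apply_le G (hB.measurableSet k))
    (hB.hasSum_sum_totalVariation_real G _).summable

lemma tsum_genNorm_le_tvH (hh : IsNorm h) (G : MatMeas m n) {B : ℕ → Set (Euc n)}
    (hB : IsMeasurablePartition B) : ∑' k, genNorm h (fun i j => G i j (B k)) ≤ tvH h G := by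
  refine le_csSup ⟨∑ i, ∑ j, h (Pi.single i 1) * (G i j).totalVariation.real Set.univ, ?_⟩
    ⟨B, hB.measurableSet, hB.disjoint, hB.iUnion_eq, rfl⟩
  rintro _ ⟨B', hBm, hBd, hBu, rfl⟩
  have hB' : IsMeasurablePartition B' := ⟨hBm, hBd, hBu⟩
  exact hasSum_le (fun k => hh.genNorm_apply_le G (hBm k)) (hh.summable_genNorm G hB').hasSum
    (hB'.hasSum_sum_totalVariation_real G _)

variable {G : MatMeas m n} {K : Set (Euc n)} {P : Euc n → Fin m → Fin n → ℝ}

lemma sum_sIntOn_le_genNorm_add (hh : IsNorm h) (hK : IsCompact K)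
    (hG : ∀ i j, (G i j).totalVariation Kᶜ = 0) (hP : Continuous P)
    (hPs : ∀ x, inSubdiffH h (P x)) {B : Set (Euc n)} (hB : MeasurableSet B) {y : Euc n}
    {ε : ℝ} (hy : ∀ x ∈ B ∩ K, dist (P x) (P y) ≤ ε) :
    ∑ i, ∑ j, sIntOn (G i j) B (fun x => P x i j) ≤
      genNorm h (fun i j => G i j B) + ∑ i, ∑ j, ε * (G i j).totalVariation.real B := by
  have hentry : ∀ i j, sIntOn (G i j) B (fun x => P x i j) ≤
      P y i j * G i j B + ε * (G i j).totalVariation.real B := fun i j => by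
    have := abs_sIntOn_sub_le (f := fun x => P x i j) hK (hG i j)
      ((continuous_apply_apply i j).comp hP) hB (c := P y i j) fun x hx => by
        rw [← Real.dist_eq]
        exact (dist_le_pi_dist (P x i) (P y i) j).trans
          ((dist_le_pi_dist (P x) (P y) i).trans (hy x hx))
    linarith [le_abs_self (sIntOn (G i j) B (fun x => P x i j) - P y i j * G i j B)]
  calc _ ≤ ∑ i, ∑ j, (P y i j * G i j B + ε * (G i j).totalVariation.real B) :=
        Finset.sum_le_sum fun i _ => Finset.sum_le_sum fun j _ => hentry i j
    _ = frob (P y) (fun i j => G i j B) + ∑ i, ∑ j, ε * (G i j).totalVariation.real B := by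
        simp only [frob, Finset.sum_add_distrib]
    _ ≤ _ := add_le_add (hh.frob_le_genNorm (hPs y) _) le_rfl

theorem sum_sInt_le_tvH (hh : IsNorm h) (hK : IsCompact K)
    (hG : ∀ i j, (G i j).totalVariation Kᶜ = 0) (hP : Continuous P)
    (hPs : ∀ x, inSubdiffH h (P x)) :
    ∑ i, ∑ j, sInt (G i j) (fun x => P x i j) ≤ tvH h G := by
  refine le_of_forall_pos_le_add_mul (c := ∑ i, ∑ j, (G i j).totalVariation.real Set.univ)
    fun ε hε => ?_
  obtain ⟨δ, hδ, hPδ⟩ := Metric.uniformContinuousOn_iff.1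
    (hK.uniformContinuousOn_of_continuous hP.continuousOn) ε hε
  obtain ⟨B, hB, hBδ⟩ := exists_isMeasurablePartition_dist_lt (X := Euc n) hδ
  have hosc : ∀ k, ∃ y, ∀ x ∈ B k ∩ K, dist (P x) (P y) ≤ ε := fun k => by
    rcases (B k ∩ K).eq_empty_or_nonempty with hempty | ⟨y, hyB, hyK⟩
    · exact ⟨0, by simp [hempty]⟩
    · exact ⟨y, fun x hx => (hPδ x hx.2 y hyK (hBδ k x hx.1 y hyB)).le⟩
  choose y hy using hosc
  have hsum : HasSum (fun k => ∑ i, ∑ j, sIntOn (G i j) (B k) fun x => P x i j)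
      (∑ i, ∑ j, sInt (G i j) fun x => P x i j) :=
    hasSum_sum fun i _ => hasSum_sum fun j _ =>
      hasSum_sIntOn hK (hG i j) ((continuous_apply_apply i j).comp hP) hB
  calc _ ≤ ∑' k, genNorm h (fun i j => G i j (B k)) +
        ∑ i, ∑ j, ε * (G i j).totalVariation.real Set.univ :=
      hasSum_le (fun k => hh.sum_sIntOn_le_genNorm_add hK hG hP hPs (hB.measurableSet k) (hy k))
        hsum ((hh.summable_genNorm G hB).hasSum.add
          (hB.hasSum_sum_totalVariation_real G fun _ _ => ε))
    _ ≤ _ := by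
      simp only [Finset.mul_sum]
      exact add_le_add (hh.tsum_genNorm_le_tvH G hB) le_rfl

end IsNorm

lemma vSuppInCpt.exists_totalVariation_compl_eq_zero {m n : ℕ} {F0 : VecMeas m n}
    (hF0 : vSuppInCpt F0) : ∃ K, IsCompact K ∧ ∀ i, (F0 i).totalVariation Kᶜ = 0 := by
  obtain ⟨K, hK, hF0K⟩ := hF0
  exact ⟨K, hK, fun i =>
    (F0 i).totalVariation_compl_eq_zero hK.measurableSet fun B hB hd => hF0K B hB hd i⟩

lemma suppInCpt.exists_totalVariation_compl_eq_zero {m n : ℕ} {G : MatMeas m n}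
    (hG : suppInCpt G) : ∃ K, IsCompact K ∧ ∀ i j, (G i j).totalVariation Kᶜ = 0 := by
  obtain ⟨K, hK, hGK⟩ := hG
  exact ⟨K, hK, fun i j =>
    (G i j).totalVariation_compl_eq_zero hK.measurableSet fun B hB hd => hGK B hB hd i j⟩

section Duality

variable {m n : ℕ} {F0 : VecMeas m n} {K0 : Set (Euc n)}

lemma intDual_le_add (hK0 : IsCompact K0) (hF0 : ∀ i, (F0 i).totalVariation K0ᶜ = 0)
    {φ ψ : Euc n → Fin m → ℝ} (hψ : Continuous ψ) (hφ : Continuous φ) {ε : ℝ}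
    (hφψ : ∀ x, dist (φ x) (ψ x) ≤ ε) :
    intDual F0 ψ ≤ intDual F0 φ + ε * ∑ i, (F0 i).totalVariation.real Set.univ := by
  rw [intDual, intDual, Finset.mul_sum, ← Finset.sum_add_distrib]
  refine Finset.sum_le_sum fun i _ => sInt_le_add hK0 (hF0 i)
    ((continuous_apply i).comp hψ) ((continuous_apply i).comp hφ) fun x => ?_
  rw [abs_sub_comm, ← Real.dist_eq]
  exact (dist_le_pi_dist (φ x) (ψ x) i).trans (hφψ x)

lemma isBoundary.intDual_eq_sum_sInt_jac {G : MatMeas m n} (hGb : isBoundary G F0)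
    (hK0 : IsCompact K0) (hF0 : ∀ i, (F0 i).totalVariation K0ᶜ = 0) {K : Set (Euc n)}
    (hK : IsCompact K) (hG : ∀ i j, (G i j).totalVariation Kᶜ = 0) {φ : Euc n → Fin m → ℝ}
    (hφ : ContDiff ℝ (⊤ : ℕ∞) φ) :
    intDual F0 φ = ∑ i, ∑ j, sInt (G i j) fun x => jac φ x i j := by
  obtain ⟨χφ, hχφ, hχφc, hχφeq⟩ := exists_contDiff_hasCompactSupport_eventuallyEq (hK0.union hK) hφ
  calc intDual F0 φ = intDual F0 χφ :=
        Finset.sum_congr rfl fun i _ => sInt_congr (hF0 i) fun x hx =>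
          congrFun (hχφeq x (Or.inl hx)).eq_of_nhds.symm i
    _ = ∑ i, ∑ j, sInt (G i j) fun x => jac χφ x i j := (hGb χφ hχφ hχφc).symm
    _ = ∑ i, ∑ j, sInt (G i j) fun x => jac φ x i j :=
        Finset.sum_congr rfl fun i _ => Finset.sum_congr rfl fun j _ =>
          sInt_congr (hG i j) fun x hx => by simp only [jac, (hχφeq x (Or.inr hx)).fderiv_eq]

theorem IsNorm.intDual_le_tvH {h : (Fin m → ℝ) → ℝ} (hh : IsNorm h) (hF0 : vSuppInCpt F0)
    {G : MatMeas m n} (hG : suppInCpt G) (hGb : isBoundary G F0) {ψ : Euc n → Fin m → ℝ}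
    (hψ : admissible h ψ) : intDual F0 ψ ≤ tvH h G := by
  obtain ⟨K0, hK0, hF0⟩ := hF0.exists_totalVariation_compl_eq_zero
  obtain ⟨K, hK, hG⟩ := hG.exists_totalVariation_compl_eq_zero
  obtain ⟨C, hψC⟩ := hψ.lipschitzWith hh
  set T := ∑ i, (F0 i).totalVariation.real Set.univ
  refine le_of_forall_pos_le_add_mul (c := T) fun ε hε => ?_
  obtain ⟨φ, hφ, hφlip, hφψ⟩ := hh.exists_contDiff_approx hψ hε
  calc intDual F0 ψ ≤ intDual F0 φ + ε * T :=
        intDual_le_add hK0 hF0 hψC.continuous hφ.continuous hφψ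
    _ = (∑ i, ∑ j, sInt (G i j) fun x => jac φ x i j) + ε * T := by
        rw [hGb.intDual_eq_sum_sInt_jac hK0 hF0 hK hG hφ]
    _ ≤ tvH h G + ε * T :=
        add_le_add (hh.sum_sInt_le_tvH hK hG (hφ.of_le (by simp)).continuous_jac
          (hh.inSubdiffH_jac (hφ.differentiable (by simp)) hφlip)) le_rfl

end Duality

theorem statement9_general {m n : ℕ}
    (h : (Fin m → ℝ) → ℝ) (hh : IsNorm h)
    (F0 : VecMeas m n) (hF0 : vSuppInCpt F0)
    (F : MatMeas m n) (hFc : suppInCpt F) (hb : isBoundary F F0)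
    (φ : Euc n → Fin m → ℝ) (hφ : admissible h φ)
    (hcal : tvH h F = intDual F0 φ) :
    (∀ G : MatMeas m n, suppInCpt G → isBoundary G F0 → tvH h F ≤ tvH h G) ∧
    (∀ ψ : Euc n → Fin m → ℝ, admissible h ψ → intDual F0 ψ ≤ intDual F0 φ) :=
  ⟨fun _ hG hGb => hcal ▸ hh.intDual_le_tvH hF0 hG hGb hφ,
    fun _ hψ => hcal ▸ hh.intDual_le_tvH hF0 hFc hb hψ⟩

/-- if `Dφ` is a calibration for `F` (i.e. `(F, φ)` is a feasible
primal-dual pair with equal objective values `|F|_H = ∫ φ · dF₀`), then `F` is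
optimal for the primal and `φ` for the dual problem. -/
theorem statement9 {m n : ℕ} (hm : 0 < m) (hn : 0 < n)
    (h : (Fin m → ℝ) → ℝ) (hh : IsNorm h)
    (F0 : VecMeas m n) (hF0 : vSuppInCpt F0)
    (F : MatMeas m n) (hFc : suppInCpt F) (hb : isBoundary F F0)
    (φ : Euc n → Fin m → ℝ) (hφ : admissible h φ)
    (hcal : tvH h F = intDual F0 φ) :
    (∀ G : MatMeas m n, suppInCpt G → isBoundary G F0 → tvH h F ≤ tvH h G) ∧
    (∀ ψ : Euc n → Fin m → ℝ, admissible h ψ → intDual F0 ψ ≤ intDual F0 φ) :=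
  statement9_general h hh F0 hF0 F hFc hb φ hφ hcal
end
end

section
/- Let m = n = 2 and let h be the Euclidean norm on ℝ², with generated norm H on ℝ^{2×2}. Let k ≥ 3, let e_1, …, e_k ∈ S¹ ∩ [0,1]² be pairwise distinct unit vectors, let 1 ≤ j < k and a_1, …, a_j > 0, a_{j+1}, …, a_k < 0 with Σ_{i=1}^k a_i e_i = 0. Set θ_i = |a_i| e_i, pick lengths l_1, …, l_k > 0, and define x_i = l_i e_i for i ≤ j and x_i = −l_i e_i for i > j. Let F be the ℝ^{2×2}-valued measure F(B) = Σ_{i=1}^k ℋ¹(B ∩ s_i) (θ_i ⊗ e_i), where s_i = [0, x_i] for i ≤ j and s_i = [x_i, 0] for i > j, and let F_0 = Σ_{i=1}^j θ_i δ_{x_i} − Σ_{i=j+1}^k θ_i δ_{x_i}. Then ∂F = F_0, |F|_H = Σ_{i=1}^k |a_i| l_i, and F minimizes |·|_H among all compactly supported finite ℝ^{2×2}-valued Borel measures G with ∂G = F_0. -/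
open MeasureTheory

noncomputable section

open scoped ENNReal

/-- The Euclidean norm on `ℝ²` as multi-material transport cost. -/
def hEuc : (Fin 2 → ℝ) → ℝ := fun θ => Real.sqrt (θ 0 ^ 2 + θ 1 ^ 2)

/-- The value of the Dirac measure `δ_p` on the set `B`. -/
def dirac01 {n : ℕ} (p : Euc n) (B : Set (Euc n)) : ℝ := Set.indicator B (fun _ => 1) p

/-!
Calibration with the identity. The matrix `Id` has operator norm `1`, so it lies in `∂H(0)`.
Testing `∂G = F₀` against a smooth `ψ` that is the identity near the supports gives
`tr G(ℝ²) = ∫ x · dF₀ = Σ |a_i| l_i` for every compactly supported competitor `G`, hence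
`|G|_H ≥ H(G(ℝ²)) ≥ Id : G(ℝ²) = Σ |a_i| l_i`; the network `F` is such a competitor. Conversely
`H(θ ⊗ e) ≤ |θ| |e|` bounds `|F|_H` by `Σ |a_i| l_i` piece by piece. `∂F = F₀` is the fundamental
theorem of calculus along each segment; the contributions at the junction `0` cancel because
`Σ a_i e_i = 0`.
-/

section MeasureTheory

variable {α : Type*} [MeasurableSpace α]

lemma hasSum_measureReal_iUnion (μ : Measure α) [IsFiniteMeasure μ] {B : ℕ → Set α}
    (hBm : ∀ k, MeasurableSet (B k)) (hBd : Pairwise (Function.onFun Disjoint B)) :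
    HasSum (fun k => μ.real (B k)) (μ.real (⋃ k, B k)) := by
  have htop : ∑' k, μ (B k) ≠ ∞ := by rw [← measure_iUnion hBd hBm]; finiteness
  rw [measureReal_def, measure_iUnion hBd hBm,
    ENNReal.tsum_toReal_eq (ENNReal.ne_top_of_tsum_ne_top htop)]
  exact (ENNReal.summable_toReal htop).hasSum

lemma abs_apply_le_totalVariation (ν : SignedMeasure α) {B : Set α} (hB : MeasurableSet B) :
    |ν B| ≤ ν.totalVariation.real B := by
  rw [ν.apply_eq_posPart_real_sub_negPart_real hB, SignedMeasure.totalVariation,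
    measureReal_add_apply]
  exact abs_sub_le_of_nonneg_of_le measureReal_nonneg (le_add_of_nonneg_right measureReal_nonneg)
    measureReal_nonneg (le_add_of_nonneg_left measureReal_nonneg)

end MeasureTheory

lemma tsum_le_of_le_hasSum {f g : ℕ → ℝ} {a : ℝ} (hf : ∀ k, 0 ≤ f k) (hfg : ∀ k, f k ≤ g k)
    (hg : HasSum g a) : ∑' k, f k ≤ a :=
  ((hg.summable.of_nonneg_of_le hf hfg).tsum_le_tsum hfg hg.summable).trans_eq hg.tsum_eq

section Segment

variable {E : Type*} [NormedAddCommGroup E] [NormedSpace ℝ E]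

lemma isometry_smul_right_of_norm_eq_one {u : E} (hu : ‖u‖ = 1) :
    Isometry fun t : ℝ => t • u :=
  Isometry.of_dist_eq fun s t => by rw [dist_eq_norm, dist_eq_norm, ← sub_smul, norm_smul, hu,
    mul_one, Real.norm_eq_abs]

lemma segment_zero_smul_eq_image {l : ℝ} (hl : 0 ≤ l) (u : E) :
    segment ℝ 0 (l • u) = (fun t : ℝ => t • u) '' Set.Icc 0 l := by
  have hIcc : Set.Icc 0 l = (· * l) '' Set.Icc 0 1 := by
    rw [Set.image_mul_right_Icc zero_le_one hl, zero_mul, one_mul]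
  rw [segment_eq_image', hIcc, Set.image_image]
  simp [mul_smul]

lemma isCompact_segment (x y : E) : IsCompact (segment ℝ x y) := by
  rw [segment_eq_image]
  exact isCompact_Icc.image (by fun_prop)

variable [MeasurableSpace E] [BorelSpace E]

lemma hausdorffMeasure_restrict_segment {u : E} (hu : ‖u‖ = 1) {l : ℝ} (hl : 0 ≤ l) :
    (μH[1] : Measure E).restrict (segment ℝ 0 (l • u)) =
      (volume.restrict (Set.Icc 0 l)).map fun t : ℝ => t • u := by
  have hiso := isometry_smul_right_of_norm_eq_one hu
  have hemb := hiso.isClosedEmbedding.measurableEmbedding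
  rw [segment_zero_smul_eq_image hl, ← Set.image_subset_range _ _ |> Set.inter_eq_left.2,
    ← Measure.restrict_restrict (hemb.measurableSet_image.2 measurableSet_Icc),
    ← hiso.map_hausdorffMeasure (Or.inl zero_le_one), hemb.restrict_map,
    Set.preimage_image_eq _ hemb.injective, hausdorffMeasure_real]

lemma hausdorffMeasure_segment {u : E} (hu : ‖u‖ = 1) {l : ℝ} (hl : 0 ≤ l) :
    (μH[1] : Measure E) (segment ℝ 0 (l • u)) = ENNReal.ofReal l := by
  rw [← Measure.restrict_apply_univ, hausdorffMeasure_restrict_segment hu hl,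
    Measure.map_apply_of_aemeasurable (by fun_prop) MeasurableSet.univ]
  simp

lemma integral_hausdorffMeasure_segment {u : E} (hu : ‖u‖ = 1) {l : ℝ} (hl : 0 ≤ l) (f : E → ℝ) :
    ∫ p in segment ℝ 0 (l • u), f p ∂μH[1] = ∫ t in Set.Icc 0 l, f (t • u) := by
  rw [hausdorffMeasure_restrict_segment hu hl,
    (isometry_smul_right_of_norm_eq_one hu).isClosedEmbedding.measurableEmbedding.integral_map]

end Segment

section Jacobian

variable {m n : ℕ} {ψ : Euc n → Fin m → ℝ}

lemma sum_jac_mul_eq_fderiv (x u : Euc n) (i : Fin m) :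
    ∑ j, jac ψ x i j * u j = fderiv ℝ ψ x u i := by
  conv_rhs => rw [← (EuclideanSpace.basisFun (Fin n) ℝ).sum_repr u]
  simp [jac, mul_comm]

lemma continuous_component (hψ : Continuous ψ) (i : Fin m) : Continuous fun x => ψ x i :=
  (continuous_apply i).comp hψ

lemma hasCompactSupport_component (hψc : HasCompactSupport ψ) (i : Fin m) :
    HasCompactSupport fun x => ψ x i :=
  hψc.comp_left (g := fun v : Fin m → ℝ => v i) rfl

lemma continuous_jac (hψ : ContDiff ℝ 1 ψ) (i : Fin m) (j : Fin n) :
    Continuous fun x => jac ψ x i j :=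
  (continuous_apply i).comp ((hψ.continuous_fderiv one_ne_zero).clm_apply continuous_const)

lemma hasCompactSupport_jac (hψc : HasCompactSupport ψ) (i : Fin m) (j : Fin n) :
    HasCompactSupport fun x => jac ψ x i j :=
  (hψc.fderiv ℝ).mono fun x hx h => hx (by simp [jac, h])

lemma integral_Icc_fderiv_smul (hψ : ContDiff ℝ 1 ψ) (u : Euc n) {l : ℝ} (hl : 0 ≤ l)
    (i : Fin m) :
    ∫ t in Set.Icc 0 l, fderiv ℝ ψ (t • u) u i = ψ (l • u) i - ψ 0 i := by
  have hderiv : ∀ t : ℝ, HasDerivAt (fun t : ℝ => ψ (t • u) i) (fderiv ℝ ψ (t • u) u i) t := by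
    intro t
    have hcurve : HasDerivAt (fun t : ℝ => t • u) u t := by
      simpa using (hasDerivAt_id t).smul_const u
    exact (hasFDerivAt_apply i _).comp_hasDerivAt t
      (((hψ.differentiable one_ne_zero) _).hasFDerivAt.comp_hasDerivAt t hcurve)
  have hcont : Continuous fun t : ℝ => fderiv ℝ ψ (t • u) u i :=
    (continuous_apply i).comp (((hψ.continuous_fderiv one_ne_zero).comp (by fun_prop)).clm_apply
      continuous_const)
  rw [integral_Icc_eq_integral_Ioc, ← intervalIntegral.integral_of_le hl,
    intervalIntegral.integral_eq_sub_of_hasDerivAt (fun t _ => hderiv t)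
      (hcont.intervalIntegrable 0 l), zero_smul]

end Jacobian

section SignedIntegral

variable {n : ℕ}

lemma sInt_eq_integral_sub {ν : SignedMeasure (Euc n)} {μ₁ μ₂ : Measure (Euc n)}
    [IsFiniteMeasure μ₁] [IsFiniteMeasure μ₂]
    (hν : ∀ B, MeasurableSet B → ν B = (μ₁ B).toReal - (μ₂ B).toReal)
    {f : Euc n → ℝ} (hf : Continuous f) (hfc : HasCompactSupport f) :
    sInt ν f = ∫ x, f x ∂μ₁ - ∫ x, f x ∂μ₂ := by
  set p := ν.toJordanDecomposition.posPart
  set q := ν.toJordanDecomposition.negPart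
  -- `p - q = ν = μ₁ - μ₂`, rearranged so that no measure is subtracted
  have hmeas : μ₁ + q = μ₂ + p := by
    ext B hB
    rw [Measure.add_apply, Measure.add_apply,
      ← ENNReal.toReal_eq_toReal_iff' (by finiteness) (by finiteness),
      ENNReal.toReal_add (by finiteness) (by finiteness),
      ENNReal.toReal_add (by finiteness) (by finiteness)]
    have h := ν.apply_eq_posPart_real_sub_negPart_real hB
    rw [hν B hB] at h
    simp only [measureReal_def] at h
    linarith
  have hint : ∀ (μ : Measure (Euc n)) [IsFiniteMeasure μ], Integrable f μ :=
    fun _ _ => hf.integrable_of_hasCompactSupport hfc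
  have key : ∫ x, f x ∂μ₁ + ∫ x, f x ∂q = ∫ x, f x ∂μ₂ + ∫ x, f x ∂p := by
    rw [← integral_add_measure (hint _) (hint _), ← integral_add_measure (hint _) (hint _), hmeas]
  simp only [sInt]
  linarith

lemma sInt_eq_sum_integral {k : ℕ} {ν : SignedMeasure (Euc n)} (c : Fin k → ℝ)
    (μ : Fin k → Measure (Euc n)) [∀ i, IsFiniteMeasure (μ i)]
    (hν : ∀ B, MeasurableSet B → ν B = ∑ i, c i * (μ i B).toReal)
    {f : Euc n → ℝ} (hf : Continuous f) (hfc : HasCompactSupport f) :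
    sInt ν f = ∑ i, c i * ∫ x, f x ∂μ i := by
  -- `ν = Σ cᵢ⁺ μᵢ - Σ cᵢ⁻ μᵢ`
  have hsplit : ∀ (i : Fin k) (r : ℝ),
      (ENNReal.ofReal (c i)).toReal * r - (ENNReal.ofReal (-c i)).toReal * r = c i * r := by
    intro i r
    rw [ENNReal.toReal_ofReal', ENNReal.toReal_ofReal', ← sub_mul,
      max_zero_sub_max_neg_zero_eq_self]
  have hint : ∀ (r : ℝ) (i : Fin k), Integrable f (ENNReal.ofReal r • μ i) := fun r i =>
    (hf.integrable_of_hasCompactSupport hfc).smul_measure ENNReal.ofReal_ne_top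
  have hfin : ∀ r : Fin k → ℝ, IsFiniteMeasure (∑ i, ENNReal.ofReal (r i) • μ i) := fun r =>
    ⟨by
      simp only [Measure.finsetSum_apply, Measure.smul_apply, smul_eq_mul]
      exact ENNReal.sum_lt_top.2 fun i _ => ENNReal.mul_lt_top ENNReal.ofReal_lt_top
        (measure_lt_top _ _)⟩
  rw [sInt_eq_integral_sub (μ₁ := ∑ i, ENNReal.ofReal (c i) • μ i)
      (μ₂ := ∑ i, ENNReal.ofReal (-c i) • μ i) _ hf hfc,
    integral_finsetSum_measure fun i _ => hint _ i,
    integral_finsetSum_measure fun i _ => hint _ i, ← Finset.sum_sub_distrib]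
  · simp only [integral_smul_measure, smul_eq_mul, hsplit]
  · intro B hB
    simp only [hν B hB, Measure.finsetSum_apply, Measure.smul_apply, smul_eq_mul]
    rw [ENNReal.toReal_sum (fun i _ => by finiteness),
      ENNReal.toReal_sum (fun i _ => by finiteness), ← Finset.sum_sub_distrib]
    simp only [ENNReal.toReal_mul, hsplit]

lemma posPart_negPart_compl_eq_zero (ν : SignedMeasure (Euc n)) {K U : Set (Euc n)}
    (hU : MeasurableSet U) (hKU : K ⊆ U) (hν : ∀ B, MeasurableSet B → Disjoint B K → ν B = 0) :
    ν.toJordanDecomposition.posPart Uᶜ = 0 ∧ ν.toJordanDecomposition.negPart Uᶜ = 0 := by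
  obtain ⟨P, hP, _, _, hpos, hneg⟩ := ν.toJordanDecomposition_spec
  have hoff : ∀ A ⊆ Uᶜ, Disjoint A K := fun A hA =>
    Set.disjoint_left.2 fun _ hpA hpK => hA hpA (hKU hpK)
  rw [hpos, hneg, SignedMeasure.toMeasureOfZeroLE_apply _ _ _ hU.compl,
    SignedMeasure.toMeasureOfLEZero_apply _ _ _ hU.compl]
  simp [hν _ (hP.inter hU.compl) (hoff _ Set.inter_subset_right),
    hν _ (hP.compl.inter hU.compl) (hoff _ Set.inter_subset_right)]

lemma sInt_eq_mul_univ_of_eqOn {ν : SignedMeasure (Euc n)} {K U : Set (Euc n)}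
    (hU : MeasurableSet U) (hKU : K ⊆ U) (hν : ∀ B, MeasurableSet B → Disjoint B K → ν B = 0)
    {f : Euc n → ℝ} {c : ℝ} (hf : ∀ x ∈ U, f x = c) :
    sInt ν f = c * ν Set.univ := by
  have hconst : ∀ μ : Measure (Euc n), μ Uᶜ = 0 → ∫ x, f x ∂μ = μ.real Set.univ * c := by
    intro μ hμ
    rw [integral_congr_ae (Filter.mem_of_superset (mem_ae_iff.2 hμ) hf), integral_const,
      smul_eq_mul]
  obtain ⟨hpos, hneg⟩ := posPart_negPart_compl_eq_zero ν hU hKU hν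
  rw [sInt, hconst _ hpos, hconst _ hneg,
    ν.apply_eq_posPart_real_sub_negPart_real MeasurableSet.univ]
  ring

lemma sInt_eq_sum_dirac {k : ℕ} {ν : SignedMeasure (Euc n)} (c : Fin k → ℝ) (y : Fin k → Euc n)
    (hν : ∀ B, MeasurableSet B → ν B = ∑ i, c i * dirac01 (y i) B)
    {f : Euc n → ℝ} (hf : Continuous f) (hfc : HasCompactSupport f) :
    sInt ν f = ∑ i, c i * f (y i) := by
  have hdirac : ∀ (p : Euc n) (B : Set (Euc n)), dirac01 p B = (Measure.dirac p B).toReal := by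
    intro p B
    by_cases hp : p ∈ B <;> simp [dirac01, hp]
  rw [sInt_eq_sum_integral c (fun i => Measure.dirac (y i)) (by simpa [hdirac] using hν) hf hfc]
  simp

end SignedIntegral

section Boundary

variable {m n : ℕ}

lemma integral_segment_sum_mul_jac {ψ : Euc n → Fin m → ℝ} (hψ : ContDiff ℝ 1 ψ) {u : Euc n}
    (hu : ‖u‖ = 1) {l : ℝ} (hl : 0 ≤ l) (i : Fin m) :
    ∫ p in segment ℝ 0 (l • u), ∑ j, u j * jac ψ p i j ∂μH[1] = ψ (l • u) i - ψ 0 i := by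
  rw [integral_hausdorffMeasure_segment hu hl]
  simp_rw [mul_comm (u _), sum_jac_mul_eq_fderiv]
  exact integral_Icc_fderiv_smul hψ u hl i

theorem isBoundary_of_star {k : ℕ} (u : Fin k → Euc n) (hu : ∀ i, ‖u i‖ = 1)
    (l : Fin k → ℝ) (hl : ∀ i, 0 ≤ l i) (c : Fin k → Fin m → ℝ) (hc : ∑ i, c i = 0)
    {F : MatMeas m n}
    (hF : ∀ B, MeasurableSet B → ∀ i' j',
      F i' j' B = ∑ i, (μH[1] (B ∩ segment ℝ 0 (l i • u i))).toReal * (c i i' * u i j'))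
    {F0 : VecMeas m n}
    (hF0 : ∀ B, MeasurableSet B → ∀ i', F0 i' B = ∑ i, c i i' * dirac01 (l i • u i) B) :
    isBoundary F F0 := by
  intro ψ hψ hψc
  have hψ1 : ContDiff ℝ 1 ψ := hψ.of_le (by simp)
  set ν : Fin k → Measure (Euc n) := fun i => μH[1].restrict (segment ℝ 0 (l i • u i))
  have : ∀ i, IsFiniteMeasure (ν i) := fun i =>
    ⟨by simp [ν, hausdorffMeasure_segment (hu i) (hl i)]⟩
  have hsInt : ∀ i' j', sInt (F i' j') (fun p => jac ψ p i' j') =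
      ∑ i, (c i i' * u i j') * ∫ p, jac ψ p i' j' ∂ν i := fun i' j' =>
    sInt_eq_sum_integral _ ν (fun B hB => by simp [ν, hF B hB, Measure.restrict_apply hB, mul_comm])
      (continuous_jac hψ1 i' j') (hasCompactSupport_jac hψc i' j')
  have hseg : ∀ i i', ∑ j', (c i i' * u i j') * ∫ p, jac ψ p i' j' ∂ν i =
      c i i' * (ψ (l i • u i) i' - ψ 0 i') := by
    intro i i'
    rw [← integral_segment_sum_mul_jac hψ1 (hu i) (hl i) i', integral_finsetSum]
    · simp_rw [integral_const_mul, Finset.mul_sum, mul_assoc]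
      rfl
    · exact fun j' _ => ((continuous_jac hψ1 i' j').integrable_of_hasCompactSupport
        (hasCompactSupport_jac hψc i' j')).const_mul _
  have hc' : ∀ i', ∑ i, c i i' = 0 := fun i' => by simpa using congrFun hc i'
  have hF0int : ∀ i', sInt (F0 i') (fun p => ψ p i') = ∑ i, c i i' * ψ (l i • u i) i' :=
    fun i' => sInt_eq_sum_dirac (fun i => c i i') _ (fun B hB => hF0 B hB i')
      (continuous_component hψ.continuous i') (hasCompactSupport_component hψc i')
  simp only [hsInt, hF0int]
  calc ∑ i', ∑ j', ∑ i, (c i i' * u i j') * ∫ p, jac ψ p i' j' ∂ν i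
      = ∑ i', ∑ i, c i i' * (ψ (l i • u i) i' - ψ 0 i') := by
        simp_rw [Finset.sum_comm (γ := Fin n), hseg]
    _ = ∑ i', ∑ i, c i i' * ψ (l i • u i) i' := by
        simp_rw [mul_sub, Finset.sum_sub_distrib, ← Finset.sum_mul, hc', zero_mul,
          Finset.sum_const_zero, sub_zero]

end Boundary

section EuclideanCost

open scoped RealInnerProductSpace

lemma hEuc_eq_norm (g : Fin 2 → ℝ) : hEuc g = ‖(WithLp.toLp 2 g : Euc 2)‖ := by
  simp [hEuc, EuclideanSpace.norm_eq, Fin.sum_univ_two]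

lemma hEuc_nonneg (g : Fin 2 → ℝ) : 0 ≤ hEuc g := Real.sqrt_nonneg _

lemma sum_mul_eq_inner (g θ : Fin 2 → ℝ) :
    ∑ i, g i * θ i = ⟪(WithLp.toLp 2 g : Euc 2), WithLp.toLp 2 θ⟫ := by
  simp [PiLp.inner_apply, mul_comm]

lemma dualNorm_hEuc (g : Fin 2 → ℝ) : dualNorm hEuc g = hEuc g := by
  refine IsGreatest.csSup_eq ⟨⟨(hEuc g)⁻¹ • g, ?_, ?_⟩, ?_⟩
  · rw [hEuc_eq_norm, WithLp.toLp_smul, norm_smul, norm_inv, ← hEuc_eq_norm,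
      Real.norm_of_nonneg (hEuc_nonneg g)]
    exact inv_mul_le_one_of_le₀ le_rfl (hEuc_nonneg g)
  · rw [sum_mul_eq_inner, WithLp.toLp_smul, inner_smul_right, real_inner_self_eq_norm_sq,
      ← hEuc_eq_norm]
    rcases eq_or_ne (hEuc g) 0 with h | h
    · simp [h]
    · field_simp
  · rintro r ⟨θ, hθ, rfl⟩
    rw [sum_mul_eq_inner]
    refine (real_inner_le_norm _ _).trans ?_
    rw [← hEuc_eq_norm, ← hEuc_eq_norm]
    exact mul_le_of_le_one_right (hEuc_nonneg g) hθ

variable {n : ℕ}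

lemma inSubdiffH_hEuc_iff {M : Fin 2 → Fin n → ℝ} :
    inSubdiffH hEuc M ↔ ∀ u : Euc n, ‖u‖ ≤ 1 → hEuc (matVec M u) ≤ 1 := by
  simp only [inSubdiffH, dualNorm_hEuc]

lemma abs_le_one_of_inSubdiffH {M : Fin 2 → Fin n → ℝ} (hM : inSubdiffH hEuc M) (i : Fin 2)
    (j : Fin n) : |M i j| ≤ 1 := by
  have hcol : matVec M (EuclideanSpace.single j 1) i = M i j := by
    simp [matVec]
  rw [← hcol, ← Real.norm_eq_abs]
  refine (PiLp.norm_apply_le (WithLp.toLp 2 (matVec M _) : Euc 2) i).trans ?_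
  rw [← hEuc_eq_norm]
  exact inSubdiffH_hEuc_iff.1 hM _ (by simp)

lemma inSubdiffH_zero : inSubdiffH hEuc (0 : Fin 2 → Fin n → ℝ) :=
  inSubdiffH_hEuc_iff.2 fun u _ => by simp [matVec, hEuc]

lemma frob_le_sum_abs {M : Fin 2 → Fin n → ℝ} (hM : inSubdiffH hEuc M) (N : Fin 2 → Fin n → ℝ) :
    frob M N ≤ ∑ i, ∑ j, |N i j| := by
  refine Finset.sum_le_sum fun i _ => Finset.sum_le_sum fun j _ => ?_
  calc M i j * N i j ≤ |M i j| * |N i j| := by rw [← abs_mul]; exact le_abs_self _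
    _ ≤ |N i j| := mul_le_of_le_one_left (abs_nonneg _) (abs_le_one_of_inSubdiffH hM i j)

lemma bddAbove_genNorm (N : Fin 2 → Fin n → ℝ) :
    BddAbove {r | ∃ M : Fin 2 → Fin n → ℝ, inSubdiffH hEuc M ∧ r = frob M N} :=
  ⟨_, fun _ ⟨_, hM, hr⟩ => hr ▸ frob_le_sum_abs hM N⟩

lemma le_genNorm {M N : Fin 2 → Fin n → ℝ} (hM : inSubdiffH hEuc M) :
    frob M N ≤ genNorm hEuc N :=
  le_csSup (bddAbove_genNorm N) ⟨M, hM, rfl⟩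

lemma genNorm_le {N : Fin 2 → Fin n → ℝ} {c : ℝ}
    (h : ∀ M, inSubdiffH hEuc M → frob M N ≤ c) : genNorm hEuc N ≤ c :=
  csSup_le ⟨_, 0, inSubdiffH_zero, rfl⟩ fun _ ⟨M, hM, hr⟩ => hr ▸ h M hM

lemma genNorm_nonneg (N : Fin 2 → Fin n → ℝ) : 0 ≤ genNorm hEuc N := by
  simpa [frob] using le_genNorm (N := N) inSubdiffH_zero

lemma genNorm_le_sum_abs (N : Fin 2 → Fin n → ℝ) : genNorm hEuc N ≤ ∑ i, ∑ j, |N i j| :=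
  genNorm_le fun _ hM => frob_le_sum_abs hM N
lemma frob_outer_le {M : Fin 2 → Fin n → ℝ} (hM : inSubdiffH hEuc M) (θ : Fin 2 → ℝ)
    {e : Euc n} (he : ‖e‖ ≤ 1) : frob M (outer θ e) ≤ hEuc θ := by
  have hfrob : frob M (outer θ e) = ∑ i, θ i * matVec M e i := by
    simp only [frob, outer, matVec, Finset.mul_sum]
    exact Finset.sum_congr rfl fun i _ => Finset.sum_congr rfl fun j _ => by ring
  rw [hfrob, sum_mul_eq_inner]
  refine (real_inner_le_norm _ _).trans ?_
  rw [← hEuc_eq_norm, ← hEuc_eq_norm]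
  exact mul_le_of_le_one_right (hEuc_nonneg θ) (inSubdiffH_hEuc_iff.1 hM e he)

lemma genNorm_sum_outer_le {k : ℕ} {c : Fin k → ℝ} (hc : ∀ i, 0 ≤ c i) (θ : Fin k → Fin 2 → ℝ)
    {e : Fin k → Euc n} (he : ∀ i, ‖e i‖ ≤ 1) :
    genNorm hEuc (fun i' j' => ∑ i, c i * (θ i i' * e i j')) ≤ ∑ i, c i * hEuc (θ i) := by
  refine genNorm_le fun M hM => ?_
  have hfrob : frob M (fun i' j' => ∑ i, c i * (θ i i' * e i j')) =
      ∑ i, c i * frob M (outer (θ i) (e i)) := by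
    simp only [frob, outer, Finset.mul_sum]
    rw [Finset.sum_comm (s := Finset.univ (α := Fin k))]
    refine Finset.sum_congr rfl fun i' _ => ?_
    rw [Finset.sum_comm (s := Finset.univ (α := Fin k))]
    exact Finset.sum_congr rfl fun j' _ => Finset.sum_congr rfl fun i _ => by ring
  rw [hfrob]
  exact Finset.sum_le_sum fun i _ =>
    mul_le_mul_of_nonneg_left (frob_outer_le hM (θ i) (he i)) (hc i)

lemma genNorm_zero : genNorm hEuc (0 : Fin 2 → Fin n → ℝ) = 0 :=
  le_antisymm (genNorm_le fun M _ => by simp [frob]) (genNorm_nonneg 0)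

lemma trace_le_genNorm (N : Fin 2 → Fin 2 → ℝ) : ∑ i, N i i ≤ genNorm hEuc N := by
  have hid : inSubdiffH hEuc (fun i j : Fin 2 => if i = j then (1 : ℝ) else 0) :=
    inSubdiffH_hEuc_iff.2 fun u hu => by
      have hmv : matVec (fun i j : Fin 2 => if i = j then (1 : ℝ) else 0) u = WithLp.ofLp u := by
        ext i; simp [matVec]
      rwa [hmv, hEuc_eq_norm, WithLp.toLp_ofLp]
  simpa [frob] using le_genNorm (N := N) hid

lemma hEuc_mul_coord (r : ℝ) (v : Euc 2) : hEuc (fun i => r * v i) = |r| * ‖v‖ := by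
  rw [hEuc_eq_norm, show (WithLp.toLp 2 fun i => r * v i : Euc 2) = r • v from rfl, norm_smul,
    Real.norm_eq_abs]

end EuclideanCost

section TotalVariation

variable {n : ℕ}

lemma tvH_le_of_eq_sum {k : ℕ} (μ : Measure (Euc n)) (s : Fin k → Set (Euc n))
    (hs : ∀ i, μ (s i) ≠ ∞) (θ : Fin k → Fin 2 → ℝ) {e : Fin k → Euc n} (he : ∀ i, ‖e i‖ ≤ 1)
    {F : MatMeas 2 n}
    (hF : ∀ B, MeasurableSet B → ∀ i' j',
      F i' j' B = ∑ i, (μ (B ∩ s i)).toReal * (θ i i' * e i j')) :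
    tvH hEuc F ≤ ∑ i, (μ (s i)).toReal * hEuc (θ i) := by
  refine Real.sSup_le ?_ (Finset.sum_nonneg fun i _ => by have := hEuc_nonneg (θ i); positivity)
  rintro r ⟨B, hBm, hBd, hBu, rfl⟩
  have hsum : ∀ i, HasSum (fun m => (μ (B m ∩ s i)).toReal) (μ (s i)).toReal := by
    intro i
    have : IsFiniteMeasure (μ.restrict (s i)) := isFiniteMeasure_restrict.2 (hs i)
    simpa [measureReal_def, Measure.restrict_apply (hBm _), hBu] using
      hasSum_measureReal_iUnion (μ.restrict (s i)) hBm hBd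
  refine tsum_le_of_le_hasSum (fun m => genNorm_nonneg _) (fun m => ?_)
    (hasSum_sum fun i _ => (hsum i).mul_right (hEuc (θ i)))
  simp only [hF _ (hBm m)]
  exact genNorm_sum_outer_le (fun i => ENNReal.toReal_nonneg) θ he

lemma genNorm_univ_le_tvH (G : MatMeas 2 n) :
    genNorm hEuc (fun i j => G i j Set.univ) ≤ tvH hEuc G := by
  refine le_csSup ⟨∑ i, ∑ j, (G i j).totalVariation.real Set.univ, ?_⟩ ?_
  · rintro r ⟨B, hBm, hBd, hBu, rfl⟩
    have hsum : ∀ i j, HasSum (fun m => (G i j).totalVariation.real (B m))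
        ((G i j).totalVariation.real Set.univ) := fun i j => by
      simpa [hBu] using hasSum_measureReal_iUnion _ hBm hBd
    refine tsum_le_of_le_hasSum (fun m => genNorm_nonneg _) (fun m => ?_)
      (hasSum_sum fun i _ => hasSum_sum fun j _ => hsum i j)
    exact (genNorm_le_sum_abs _).trans (Finset.sum_le_sum fun i _ => Finset.sum_le_sum
      fun j _ => abs_apply_le_totalVariation _ (hBm m))
  · refine ⟨fun m => if m = 0 then Set.univ else ∅, fun m => ?_, fun a b hab => ?_, ?_, ?_⟩
    · dsimp only
      split_ifs <;> simp
    · simp only [Function.onFun]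
      split_ifs <;> simp_all
    · exact Set.eq_univ_of_forall fun p => Set.mem_iUnion.2 ⟨0, by simp⟩
    · rw [tsum_eq_single 0 fun m hm => by simp [hm]; exact genNorm_zero]
      simp

end TotalVariation

section Calibration

variable {n : ℕ}

lemma exists_contDiff_eq_id_on_ball (R : ℝ) : ∃ ψ : Euc n → Fin n → ℝ,
    ContDiff ℝ (⊤ : ℕ∞) ψ ∧ HasCompactSupport ψ ∧
    (∀ x ∈ Metric.ball 0 R, ∀ i, ψ x i = x i) ∧
    (∀ x ∈ Metric.ball 0 R, ∀ i j, jac ψ x i j = if i = j then 1 else 0) := by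
  let φ : ContDiffBump (0 : Euc n) := ⟨max R 1, max R 1 + 1, by positivity, by linarith⟩
  have hφ : ∀ x ∈ Metric.ball (0 : Euc n) R, φ x = 1 := fun x hx =>
    φ.one_of_mem_closedBall (Metric.closedBall_subset_closedBall (le_max_left R 1)
      (Metric.ball_subset_closedBall hx))
  let L := (PiLp.continuousLinearEquiv 2 ℝ fun _ : Fin n => ℝ).toContinuousLinearMap
  refine ⟨fun x => φ x • L x, φ.contDiff.smul L.contDiff,
    φ.hasCompactSupport.smul_right, fun x hx i => by simp [hφ x hx, L], fun x hx i j => ?_⟩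
  have hloc : (fun x => φ x • L x) =ᶠ[nhds x] L :=
    Filter.eventually_of_mem (Metric.isOpen_ball.mem_nhds hx) fun y hy => by simp [hφ y hy]
  rw [jac, hloc.fderiv_eq, L.fderiv]
  simp [L]

theorem trace_univ_eq_of_isBoundary {k : ℕ} {G : MatMeas n n} (hG : suppInCpt G)
    (c : Fin k → Fin n → ℝ) (y : Fin k → Euc n) {F0 : VecMeas n n}
    (hF0 : ∀ B, MeasurableSet B → ∀ i', F0 i' B = ∑ i, c i i' * dirac01 (y i) B)
    (hGF0 : isBoundary G F0) :
    ∑ i', G i' i' Set.univ = ∑ i, ∑ i', c i i' * y i i' := by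
  obtain ⟨K, hK, hGK⟩ := hG
  obtain ⟨R, hR⟩ := (hK.union (Set.finite_range y).isCompact).isBounded.subset_ball 0
  obtain ⟨ψ, hψ, hψc, hψid, hψjac⟩ := exists_contDiff_eq_id_on_ball (n := n) R
  have hlhs : ∀ i j, sInt (G i j) (fun x => jac ψ x i j) =
      (if i = j then 1 else 0) * G i j Set.univ := fun i j =>
    sInt_eq_mul_univ_of_eqOn Metric.isOpen_ball.measurableSet (Set.subset_union_left.trans hR)
      (fun B hB hBK => hGK B hB hBK i j) (fun x hx => hψjac x hx i j)
  have hrhs : ∀ i', sInt (F0 i') (fun x => ψ x i') = ∑ i, c i i' * y i i' := fun i' => by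
    rw [sInt_eq_sum_dirac (fun i => c i i') y (fun B hB => hF0 B hB i')
      (continuous_component hψ.continuous i') (hasCompactSupport_component hψc i')]
    exact Finset.sum_congr rfl fun i _ => by
      rw [hψid _ (hR (Set.subset_union_right (Set.mem_range_self i)))]
  have := hGF0 ψ hψ hψc
  simp only [hlhs, hrhs, ite_mul, one_mul, zero_mul, Finset.sum_ite_eq] at this
  simpa [Finset.sum_comm (γ := Fin n)] using this

theorem sum_le_tvH_of_isBoundary {k : ℕ} {G : MatMeas 2 2} (hG : suppInCpt G)
    (c : Fin k → Fin 2 → ℝ) (y : Fin k → Euc 2) {F0 : VecMeas 2 2}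
    (hF0 : ∀ B, MeasurableSet B → ∀ i', F0 i' B = ∑ i, c i i' * dirac01 (y i) B)
    (hGF0 : isBoundary G F0) :
    ∑ i, ∑ i', c i i' * y i i' ≤ tvH hEuc G := by
  rw [← trace_univ_eq_of_isBoundary hG c y hF0 hGF0]
  exact (trace_le_genNorm _).trans (genNorm_univ_le_tvH G)

lemma suppInCpt_of_eq_sum {m k : ℕ} (μ : Measure (Euc n)) {s : Fin k → Set (Euc n)}
    (hs : ∀ i, IsCompact (s i)) (w : Fin k → Fin m → Fin n → ℝ) {F : MatMeas m n}
    (hF : ∀ B, MeasurableSet B → ∀ i' j', F i' j' B = ∑ i, (μ (B ∩ s i)).toReal * w i i' j') :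
    suppInCpt F := by
  refine ⟨⋃ i, s i, isCompact_iUnion hs, fun B hB hBs i' j' => ?_⟩
  rw [hF B hB]
  refine Finset.sum_eq_zero fun i _ => ?_
  rw [(Set.disjoint_iUnion_right.1 hBs i).inter_eq]
  simp

end Calibration

section Junction

variable {k : ℕ} {j : ℕ}

-- `θ_i ⊗ e_i = (±θ_i) ⊗ u_i`: the network is a star of segments `[0, l_i u_i]` carrying the
-- weights `(±θ_i) ⊗ u_i`, which are the coefficients of `F₀`.
lemma exists_star_of_junction {e : Fin k → Euc 2} (he : ∀ i, ‖e i‖ = 1) {l : Fin k → ℝ}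
    {x : Fin k → Euc 2} (hx : ∀ i, x i = (if (i : ℕ) < j then l i else -l i) • e i)
    {s : Fin k → Set (Euc 2)}
    (hs : ∀ i, s i = if (i : ℕ) < j then segment ℝ 0 (x i) else segment ℝ (x i) 0) :
    ∃ u : Fin k → Euc 2, (∀ i, ‖u i‖ = 1) ∧ (∀ i, x i = l i • u i) ∧
      (∀ i, s i = segment ℝ 0 (x i)) ∧ ∀ i (r : ℝ) j', r * e i j' =
        (if (i : ℕ) < j then r else -r) * u i j' := by
  refine ⟨fun i => if (i : ℕ) < j then e i else -e i, fun i => ?_, fun i => ?_, fun i => ?_,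
    fun i r j' => ?_⟩ <;> by_cases h : (i : ℕ) < j
  all_goals simp [h, he, hx, hs, segment_symm]

lemma sum_signed_eq_zero {e : Fin k → Euc 2} {a : Fin k → ℝ}
    (ha : ∀ i : Fin k, if (i : ℕ) < j then 0 < a i else a i < 0) (hsum : ∑ i, a i • e i = 0)
    {θ : Fin k → Fin 2 → ℝ} (hθ : ∀ i, θ i = fun i' => |a i| * e i i') :
    ∑ i : Fin k, (fun i' => if (i : ℕ) < j then θ i i' else -θ i i') = 0 := by
  have hterm : ∀ (i : Fin k) i', (if (i : ℕ) < j then θ i i' else -θ i i') = (a i • e i) i' := by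
    intro i i'
    have hai := ha i
    by_cases h : (i : ℕ) < j
    · simp only [h, if_true] at hai ⊢
      simp [hθ, abs_of_pos hai]
    · simp only [h, if_false] at hai ⊢
      simp [hθ, abs_of_neg hai]
  ext i'
  simp only [Finset.sum_apply, hterm, Pi.zero_apply]
  simpa using congrArg (fun v : Euc 2 => v i') hsum

lemma sum_mul_self_eq_one_of_norm_eq_one {n : ℕ} {v : Euc n} (hv : ‖v‖ = 1) :
    ∑ i, v i * v i = 1 := by
  have h := real_inner_self_eq_norm_sq v
  rw [PiLp.inner_apply, hv] at h
  simpa [← sq] using h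

end Junction

theorem statement13_general (k : ℕ)
    (e : Fin k → Euc 2) (he : ∀ i, ‖e i‖ = 1)
    (j : ℕ)
    (a : Fin k → ℝ) (ha : ∀ i : Fin k, if (i : ℕ) < j then 0 < a i else a i < 0)
    (hsum : ∑ i, a i • e i = 0)
    (l : Fin k → ℝ) (hl : ∀ i, 0 < l i)
    (θ : Fin k → Fin 2 → ℝ) (hθ : ∀ i, θ i = fun i' => |a i| * e i i')
    (x : Fin k → Euc 2) (hx : ∀ i, x i = (if (i : ℕ) < j then l i else -l i) • e i)
    (s : Fin k → Set (Euc 2))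
    (hs : ∀ i, s i = if (i : ℕ) < j then segment ℝ 0 (x i) else segment ℝ (x i) 0)
    (F : MatMeas 2 2)
    (hF : ∀ B : Set (Euc 2), MeasurableSet B → ∀ i' j',
      F i' j' B = ∑ i, (μH[1] (B ∩ s i)).toReal * (θ i i' * e i j'))
    (F0 : VecMeas 2 2)
    (hF0 : ∀ B : Set (Euc 2), MeasurableSet B → ∀ i',
      F0 i' B = ∑ i : Fin k, (if (i : ℕ) < j then θ i i' else -θ i i') * dirac01 (x i) B) :
    isBoundary F F0 ∧ tvH hEuc F = ∑ i, |a i| * l i ∧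
    ∀ G : MatMeas 2 2, suppInCpt G → isBoundary G F0 → tvH hEuc F ≤ tvH hEuc G := by
  obtain ⟨u, hu, hxu, hsx, hsign⟩ := exists_star_of_junction (j := j) (l := l) he hx hs
  have hs_len : ∀ i, (μH[1] (s i)).toReal = l i := fun i => by
    rw [hsx, hxu, hausdorffMeasure_segment (hu i) (hl i).le, ENNReal.toReal_ofReal (hl i).le]
  have hθ_len : ∀ i, hEuc (θ i) = |a i| := fun i => by rw [hθ, hEuc_mul_coord, he, abs_abs, mul_one]
  have hbd : isBoundary F F0 := by
    refine isBoundary_of_star u hu l (fun i => (hl i).le) _ (sum_signed_eq_zero ha hsum hθ)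
      (fun B hB i' j' => ?_) (fun B hB i' => by simp only [hF0 B hB, hxu])
    simp only [hF B hB, hsx, hxu, hsign _ (θ _ _)]
  have hcal : ∀ G, suppInCpt G → isBoundary G F0 → ∑ i, |a i| * l i ≤ tvH hEuc G := by
    intro G hG hGb
    convert sum_le_tvH_of_isBoundary hG _ x hF0 hGb using 2 with i
    simp only [hxu, PiLp.smul_apply, smul_eq_mul, mul_left_comm _ (l i), ← hsign, hθ, mul_assoc,
      ← Finset.mul_sum, sum_mul_self_eq_one_of_norm_eq_one (he i)]
    ring
  have hup : tvH hEuc F ≤ ∑ i, |a i| * l i := by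
    refine (tvH_le_of_eq_sum μH[1] s (fun i => ?_) θ (fun i => (he i).le) hF).trans_eq ?_
    · rw [hsx, hxu, hausdorffMeasure_segment (hu i) (hl i).le]; exact ENNReal.ofReal_ne_top
    · simp only [hs_len, hθ_len, mul_comm]
  have htv : tvH hEuc F = ∑ i, |a i| * l i := le_antisymm hup (hcal F
    (suppInCpt_of_eq_sum μH[1] (fun i => hsx i ▸ isCompact_segment _ _) _ hF) hbd)
  exact ⟨hbd, htv, fun G hG hGb => htv ▸ hcal G hG hGb⟩

/-- arbitrary degree junction: with `h` the Euclidean norm on `ℝ²`,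
pairwise distinct unit vectors `e_1, …, e_k ∈ S¹ ∩ [0,1]²` (`k ≥ 3`), coefficients
`a_i` (positive for `i ≤ j`, negative for `i > j`) with `Σ a_i e_i = 0`, multiplicities
`θ_i = |a_i| e_i`, lengths `l_i > 0` and end points `x_i = ± l_i e_i`, the network
`F = Σ_i θ_i ⊗ e_i ℋ¹⌞s_i` satisfies `∂F = F₀`, `|F|_H = Σ_i |a_i| l_i`, and `F`
minimizes `|·|_H` among all compactly supported measures `G` with `∂G = F₀`. -/
theorem statement13 (k : ℕ) (hk : 3 ≤ k)
    (e : Fin k → Euc 2) (he : ∀ i, ‖e i‖ = 1)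
    (heQ : ∀ i, 0 ≤ e i 0 ∧ e i 0 ≤ 1 ∧ 0 ≤ e i 1 ∧ e i 1 ≤ 1)
    (hinj : Function.Injective e)
    (j : ℕ) (hj1 : 1 ≤ j) (hjk : j < k)
    (a : Fin k → ℝ) (ha : ∀ i : Fin k, if (i : ℕ) < j then 0 < a i else a i < 0)
    (hsum : ∑ i, a i • e i = 0)
    (l : Fin k → ℝ) (hl : ∀ i, 0 < l i)
    (θ : Fin k → Fin 2 → ℝ) (hθ : ∀ i, θ i = fun i' => |a i| * e i i')
    (x : Fin k → Euc 2) (hx : ∀ i, x i = (if (i : ℕ) < j then l i else -l i) • e i)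
    (s : Fin k → Set (Euc 2))
    (hs : ∀ i, s i = if (i : ℕ) < j then segment ℝ 0 (x i) else segment ℝ (x i) 0)
    (F : MatMeas 2 2)
    (hF : ∀ B : Set (Euc 2), MeasurableSet B → ∀ i' j',
      F i' j' B = ∑ i, (μH[1] (B ∩ s i)).toReal * (θ i i' * e i j'))
    (F0 : VecMeas 2 2)
    (hF0 : ∀ B : Set (Euc 2), MeasurableSet B → ∀ i',
      F0 i' B = ∑ i : Fin k, (if (i : ℕ) < j then θ i i' else -θ i i') * dirac01 (x i) B) :
    isBoundary F F0 ∧ tvH hEuc F = ∑ i, |a i| * l i ∧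
    ∀ G : MatMeas 2 2, suppInCpt G → isBoundary G F0 → tvH hEuc F ≤ tvH hEuc G :=
  statement13_general k e he j a ha hsum l hl θ hθ x hx s hs F hF F0 hF0
end
end
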